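/- arXiv:2208.04885 — 2 statements merged into one kernel-verified Lean document; each statement's English description precedes it below -/
import Mathlib

section
/- Let $V$ and $V_R$ (for $R \in \mathbb{R}_{>0}$) be real vector spaces equipped with quadratic forms $Q$ and $Q_R$ respectively. Suppose $Q$ has finite index $k$ (the maximal dimension of a subspace on which $Q$ is negative definite), and for each $R$ there is a linear map $X \mapsto X_R$ from $V$ to $V_R$ such that $\lim_{R \to \infty} Q_R(X_R) = Q(X)$ for every $X \in V$. Then $\liminf_{R \to \infty} \mathrm{Ind}(Q_R) \geq \mathrm{Ind}(Q)$. -/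
open Filter

/-- The index of a quadratic form: the supremum of dimensions of (finite-dimensional)
subspaces on which it is negative definite. -/
noncomputable def qIndex {V : Type*} [AddCommGroup V] [Module ℝ V]
    (Q : QuadraticForm ℝ V) : ℕ∞ :=
  ⨆ (n : ℕ) (_ : ∃ W : Submodule ℝ V, FiniteDimensional ℝ W ∧
      Module.finrank ℝ W = n ∧ ∀ x ∈ W, x ≠ 0 → Q x < 0), (n : ℕ∞)

open Matrix Metric Module Topology

/-! Pull a negative definite `k`-dimensional subspace of `V` back to `ℝᵏ`; the forms
`X ↦ Q_R (X_R)` then converge pointwise, hence so do their Gram matrices. Since `(A, y) ↦ yᵀ A y`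
is jointly continuous and the limit form is negative on the compact unit sphere, the tube lemma
makes `Q_R ∘ (·)_R` negative on the sphere, hence negative definite, for all large `R`, and the
image of the subspace witnesses `k ≤ Ind(Q_R)`. -/

namespace QuadraticForm

variable {n : Type*} [Fintype n]

theorem apply_eq_dotProduct_toMatrix'_mulVec [DecidableEq n] {R : Type*} [CommRing R]
    [Invertible (2 : R)] (q : QuadraticForm R (n → R)) (x : n → R) :
    q x = x ⬝ᵥ q.toMatrix' *ᵥ x := by
  rw [toMatrix', ← Matrix.toLinearMap₂'_apply', Matrix.toLinearMap₂'_toMatrix',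
    QuadraticMap.associated_eq_self_apply]

theorem tendsto_toMatrix' [DecidableEq n] {ι : Type*} {l : Filter ι}
    {q : ι → QuadraticForm ℝ (n → ℝ)} {q₀ : QuadraticForm ℝ (n → ℝ)}
    (hq : ∀ x, Tendsto (fun i => q i x) l (𝓝 (q₀ x))) :
    Tendsto (fun i => (q i).toMatrix') l (𝓝 q₀.toMatrix') := by
  refine tendsto_pi_nhds.2 fun a => tendsto_pi_nhds.2 fun b => ?_
  -- `associated` halves the polarization via the endomorphism `⅟2 : Module.End ℝ ℝ`
  simp only [toMatrix', LinearMap.toMatrix₂'_apply, QuadraticMap.associated_apply,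
    Module.End.smul_def]
  exact ((LinearMap.continuous_of_finiteDimensional _).tendsto _).comp
    (((hq _).sub (hq _)).sub (hq _))

theorem neg_of_forall_mem_sphere {E : Type*} [NormedAddCommGroup E]
    [NormedSpace ℝ E] {q : QuadraticForm ℝ E} (h : ∀ y ∈ sphere (0 : E) 1, q y < 0) {x : E}
    (hx : x ≠ 0) : q x < 0 := by
  have hx' : ‖x‖ ≠ 0 := norm_ne_zero_iff.2 hx
  have hy : ‖x‖⁻¹ • x ∈ sphere (0 : E) 1 := by
    rw [mem_sphere_zero_iff_norm, norm_smul, norm_inv, norm_norm, inv_mul_cancel₀ hx']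
  calc q x = ‖x‖ ^ 2 * q (‖x‖⁻¹ • x) := by
        rw [QuadraticMap.map_smul, smul_eq_mul]; field_simp
    _ < 0 := mul_neg_of_pos_of_neg (by positivity) (h _ hy)

theorem eventually_neg_of_tendsto {ι : Type*}
    {l : Filter ι} {q : ι → QuadraticForm ℝ (n → ℝ)} {q₀ : QuadraticForm ℝ (n → ℝ)}
    (hq : ∀ x, Tendsto (fun i => q i x) l (𝓝 (q₀ x))) (hq₀ : ∀ x ≠ 0, q₀ x < 0) :
    ∀ᶠ i in l, ∀ x ≠ 0, q i x < 0 := by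
  classical
  have hcont : Continuous fun p : Matrix n n ℝ × (n → ℝ) => p.2 ⬝ᵥ p.1 *ᵥ p.2 :=
    continuous_snd.dotProduct (continuous_fst.matrix_mulVec continuous_snd)
  have hnear : ∀ᶠ A in 𝓝 q₀.toMatrix', ∀ y ∈ sphere (0 : n → ℝ) 1, y ⬝ᵥ A *ᵥ y < 0 :=
    (isCompact_sphere 0 1).eventually_forall_of_forall_eventually fun y hy =>
      hcont.continuousAt.eventually_lt continuousAt_const <| by
        simpa only [← apply_eq_dotProduct_toMatrix'_mulVec] using
          hq₀ y (ne_zero_of_mem_sphere one_ne_zero ⟨y, hy⟩)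
  filter_upwards [(tendsto_toMatrix' hq).eventually hnear] with i hi x hx
  exact neg_of_forall_mem_sphere (fun y hy => by
    simpa only [apply_eq_dotProduct_toMatrix'_mulVec] using hi y hy) hx

end QuadraticForm

section

variable {V : Type*} [AddCommGroup V] [Module ℝ V] (Q : QuadraticForm ℝ V)

theorem finrank_le_qIndex_of_neg {E : Type*} [AddCommGroup E] [Module ℝ E]
    [FiniteDimensional ℝ E] (f : E →ₗ[ℝ] V) (hf : ∀ x ≠ 0, Q (f x) < 0) :
    (finrank ℝ E : ℕ∞) ≤ qIndex Q := by
  have hinj : Function.Injective f := (injective_iff_map_eq_zero f).2 fun x hx =>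
    by_contra fun hx0 => (hf x hx0).ne (by rw [hx, map_zero])
  refine le_iSup₂_of_le (finrank ℝ E) ⟨LinearMap.range f, inferInstance,
    LinearMap.finrank_range_of_inj hinj, ?_⟩ le_rfl
  rintro _ ⟨x, rfl⟩ hx
  exact hf x (by rintro rfl; exact hx (map_zero f))

theorem exists_neg_linearMap_of_qIndex_eq {k : ℕ} (hk : qIndex Q = k) :
    ∃ L : (Fin k → ℝ) →ₗ[ℝ] V, ∀ x ≠ 0, Q (L x) < 0 := by
  set S := {n : ℕ | ∃ W : Submodule ℝ V, FiniteDimensional ℝ W ∧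
      finrank ℝ W = n ∧ ∀ x ∈ W, x ≠ 0 → Q x < 0}
  have hS : qIndex Q = sSup (((↑) : ℕ → ℕ∞) '' S) := by rw [sSup_image]; rfl
  have : Nonempty (((↑) : ℕ → ℕ∞) '' S) :=
    ⟨0, 0, ⟨⊥, inferInstance, finrank_bot ℝ V, fun x hx hx0 => (hx0 hx).elim⟩, rfl⟩
  obtain ⟨n, ⟨W, _, hWn, hW⟩, hnk⟩ :=
    ENat.sSup_mem_of_nonempty_of_lt_top (s := ((↑) : ℕ → ℕ∞) '' S)
      (by rw [← hS, hk]; exact ENat.natCast_lt_top k)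
  rw [← hS, hk, Nat.cast_inj] at hnk
  subst hnk
  let b := finBasisOfFinrankEq ℝ W hWn
  refine ⟨W.subtype ∘ₗ b.equivFun.symm.toLinearMap, fun x hx => hW _ (Subtype.prop _) ?_⟩
  simpa only [LinearMap.comp_apply, Submodule.subtype_apply, LinearEquiv.coe_coe, ne_eq,
    Submodule.coe_eq_zero, LinearEquiv.map_eq_zero_iff] using hx

end

theorem stmt0 {V : Type*} [AddCommGroup V] [Module ℝ V]
    (VR : ℝ → Type*) [∀ R, AddCommGroup (VR R)] [∀ R, Module ℝ (VR R)]
    (Q : QuadraticForm ℝ V) (QR : ∀ R, QuadraticForm ℝ (VR R))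
    (T : ∀ R, V →ₗ[ℝ] VR R)
    (k : ℕ) (hk : qIndex Q = (k : ℕ∞))
    (hconv : ∀ X : V, Tendsto (fun R => QR R (T R X)) atTop (nhds (Q X))) :
    (k : ℕ∞) ≤ Filter.atTop.liminf fun R => qIndex (QR R) := by
  obtain ⟨L, hL⟩ := exists_neg_linearMap_of_qIndex_eq Q hk
  have hev : ∀ᶠ R in atTop, ∀ x ≠ 0, QR R (T R (L x)) < 0 :=
    QuadraticForm.eventually_neg_of_tendsto (q := fun R => (QR R).comp (T R ∘ₗ L))
      (q₀ := Q.comp L) (fun x => hconv (L x)) hL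
  refine le_liminf_of_le (by isBoundedDefault) (hev.mono fun R hR => ?_)
  simpa using finrank_le_qIndex_of_neg (QR R) (T R ∘ₗ L) hR
end

section
/- Let $X$ and $Y$ be metric spaces, and let $(F_y)_{y \in Y}$ be a family of continuous functions $F_y : X \to \mathbb{R}$, depending continuously on $y$ in the compact-open topology, which is locally uniformly proper. Assume each $F_y$ achieves its minimum at a unique point $x_m(y) \in X$. Then the map $y \mapsto x_m(y)$ is continuous. -/
theorem stmt15 {X Y : Type*} [MetricSpace X] [MetricSpace Y]
    (F : Y → C(X, ℝ)) (hF : Continuous F)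
    (hproper : ∀ y₀ : Y, ∃ U ∈ nhds y₀, ∀ C : ℝ, ∃ K : Set X, IsCompact K ∧
      ∀ y ∈ U, ∀ x ∉ K, C < F y x)
    (xm : Y → X)
    (hmin : ∀ y : Y, ∀ x : X, F y (xm y) ≤ F y x)
    (huniq : ∀ y : Y, ∀ x : X, (∀ x' : X, F y x ≤ F y x') → x = xm y) :
    Continuous xm := by
  rw [continuous_iff_seqContinuous]
  intro u y₀ hu
  obtain ⟨U, hU, hKs⟩ := hproper y₀
  obtain ⟨K, hK, hKC⟩ := hKs (F y₀ (xm y₀) + 1)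
  -- eventually xm (u n) ∈ K
  have hUev : ∀ᶠ n in Filter.atTop, u n ∈ U := hu.eventually_mem hU
  have hevalc : ∀ x : X, Continuous fun y : Y => F y x := fun x =>
    (continuous_eval_const x).comp hF
  have hlt : ∀ᶠ n in Filter.atTop, F (u n) (xm y₀) < F y₀ (xm y₀) + 1 := by
    have : Filter.Tendsto (fun n => F (u n) (xm y₀)) Filter.atTop
        (nhds (F y₀ (xm y₀))) := ((hevalc (xm y₀)).tendsto y₀).comp hu
    exact this.eventually_lt_const (by linarith)
  have hmem : ∀ᶠ n in Filter.atTop, xm (u n) ∈ K := by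
    filter_upwards [hUev, hlt] with n hnU hnlt
    by_contra hnot
    have h1 := hKC (u n) hnU (xm (u n)) hnot
    have h2 := hmin (u n) (xm y₀)
    linarith
  refine Filter.tendsto_of_subseq_tendsto fun ns hns => ?_
  have hmem' : ∃ᶠ n in Filter.atTop, xm (u (ns n)) ∈ K :=
    ((hns.eventually hmem)).frequently
  obtain ⟨a, haK, φ, hφ, hφt⟩ := hK.tendsto_subseq' hmem'
  have hyt : Filter.Tendsto (fun n => u (ns (φ n))) Filter.atTop (nhds y₀) :=
    hu.comp (hns.comp hφ.tendsto_atTop)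
  have hFt : Filter.Tendsto (fun n => F (u (ns (φ n)))) Filter.atTop (nhds (F y₀)) :=
    (hF.tendsto y₀).comp hyt
  have hunif : TendstoUniformlyOn (fun n x => F (u (ns (φ n))) x) (F y₀) Filter.atTop K :=
    (ContinuousMap.tendsto_iff_forall_isCompact_tendstoUniformlyOn.mp hFt) K hK
  have hxinK : ∀ᶠ n in Filter.atTop, xm (u (ns (φ n))) ∈ K :=
    (hns.comp hφ.tendsto_atTop).eventually hmem
  have hwithin : Filter.Tendsto (fun n => xm (u (ns (φ n)))) Filter.atTop (nhdsWithin a K) := by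
    rw [tendsto_nhdsWithin_iff]
    exact ⟨hφt, hxinK⟩
  have hLHS : Filter.Tendsto (fun n => F (u (ns (φ n))) (xm (u (ns (φ n))))) Filter.atTop
      (nhds (F y₀ a)) :=
    hunif.tendsto_comp ((F y₀).continuous.continuousWithinAt) hwithin
  have ha : a = xm y₀ := by
    apply huniq y₀ a
    intro x'
    have hRHS : Filter.Tendsto (fun n => F (u (ns (φ n))) x') Filter.atTop
        (nhds (F y₀ x')) := ((hevalc x').tendsto y₀).comp hyt
    exact le_of_tendsto_of_tendsto' hLHS hRHS fun n => hmin _ _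
  exact ⟨φ, ha ▸ hφt⟩
end
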